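/- arXiv:cs/0505075 — 4 statements merged into one kernel-verified Lean document; each statement's English description precedes it below -/
import Mathlib

section
/- Fix n ≥ 1 and i coprime to 6 with i ≤ n. Define the layer L_i = { i·2^k·3^s : k,s ≥ 0, i·2^k·3^s ≤ n }, and for s ≥ 0 let row_s = { i·2^k·3^s ≤ n : k ≥ 0 } with length r_s = |row_s|. Then for any s with r_{s+1} ≥ 1, we have 1 ≤ r_s − r_{s+1} ≤ 2. -/
/-!
The row of `L_i` at height `s` is `{k | (i * 3 ^ s) * 2 ^ k ≤ n}`, whose length is the bit length
of `a_s = n / (i * 3 ^ s)`. Since `a_{s+1} = a_s / 3`, the claim becomes: dividing a number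
`a ≥ 3` by three shortens its binary expansion by one or two digits, because
`2 * (a / 3) ≤ a < 4 * (a / 3 + 1)`.
-/

open Finset

lemma card_filter_mul_two_pow_le {M : ℕ} (hM : 0 < M) (n : ℕ) :
    #{k ∈ range (n + 1) | M * 2 ^ k ≤ n} = (n / M).size := by
  have hrow : {k ∈ range (n + 1) | M * 2 ^ k ≤ n} = range (n / M).size := by
    ext k
    simp only [mem_filter, mem_range, Nat.lt_size, Nat.le_div_iff_mul_le hM, mul_comm (2 ^ k)]
    refine ⟨And.right, fun hk => ⟨?_, hk⟩⟩
    calc k < 2 ^ k := Nat.lt_two_pow_self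
      _ ≤ M * 2 ^ k := Nat.le_mul_of_pos_left _ hM
      _ < n + 1 := Nat.lt_succ_of_le hk
  rw [hrow, card_range]

lemma Nat.size_div_three_add_one_le {a : ℕ} (ha : 3 ≤ a) : (a / 3).size + 1 ≤ a.size := by
  have hb : 0 < (a / 3).size := Nat.size_pos.mpr (by omega)
  have hpow : 2 ^ ((a / 3).size - 1) ≤ a / 3 := Nat.lt_size.mp (by omega)
  have hsucc : 2 ^ (a / 3).size = 2 * 2 ^ ((a / 3).size - 1) := by
    rw [← pow_succ', Nat.succ_eq_add_one, Nat.sub_add_cancel hb]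
  exact Nat.lt_size.mpr (by omega)

lemma Nat.size_le_size_div_three_add_two (a : ℕ) : a.size ≤ (a / 3).size + 2 := by
  have hb := Nat.lt_size_self (a / 3)
  have hpow : 2 ^ ((a / 3).size + 2) = 4 * 2 ^ (a / 3).size := by ring
  exact Nat.size_le.mpr (by omega)

theorem stmt_4_general (n i : ℕ) (hin : 1 ≤ i)
    (r : ℕ → ℕ)
    (hr : ∀ s, r s = ((Finset.range (n + 1)).filter (fun k => i * 2 ^ k * 3 ^ s ≤ n)).card)
    (s : ℕ) (hpos : 1 ≤ r (s + 1)) :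
    r (s + 1) + 1 ≤ r s ∧ r s ≤ r (s + 1) + 2 := by
  have hrow : ∀ t, r t = (n / (i * 3 ^ t)).size := fun t => by
    rw [hr, ← card_filter_mul_two_pow_le (by positivity)]
    simp only [mul_right_comm i]
  have hdiv : n / (i * 3 ^ (s + 1)) = n / (i * 3 ^ s) / 3 := by
    rw [Nat.div_div_eq_div_mul, pow_succ, mul_assoc]
  rw [hrow, hdiv] at hpos
  rw [hrow, hrow, hdiv]
  have ha : 3 ≤ n / (i * 3 ^ s) := by
    by_contra! h
    rw [Nat.div_eq_of_lt h, Nat.size_zero] at hpos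
    omega
  exact ⟨Nat.size_div_three_add_one_le ha, Nat.size_le_size_div_three_add_two _⟩

theorem stmt_4 (n i : ℕ) (hn : 1 ≤ n) (hi : Nat.Coprime i 6) (hin : 1 ≤ i) (hile : i ≤ n)
    (r : ℕ → ℕ)
    (hr : ∀ s, r s = ((Finset.range (n + 1)).filter (fun k => i * 2 ^ k * 3 ^ s ≤ n)).card)
    (s : ℕ) (hpos : 1 ≤ r (s + 1)) :
    r (s + 1) + 1 ≤ r s ∧ r s ≤ r (s + 1) + 2 :=
  stmt_4_general n i hin r hr s hpos
end

section
/- Fix n ≥ 1 and i coprime to 6 with i ≤ n. For s ≥ 0 let r_s = |{ k ≥ 0 : i·2^k·3^s ≤ n }| be the length of row s of layer L_i. Then there is no index s with r_s ≥ 1 such that r_{s} = r_{s+1} + 1 and r_{s+1} = r_{s+2} + 1 (with r_{s+2} ≥ 1); i.e., there cannot be three consecutive nonempty rows whose lengths each decrease by exactly 1. -/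
/-!
Row `s` of the layer is `{k | i * 2 ^ k * 3 ^ s ≤ n}`, an initial segment of `ℕ`. Since `2 ^ 3 < 3 ^ 2`,
if `k` lies in row `s + 2` then `k + 3` lies in row `s`, so a nonempty row `s + 2` is at least three
shorter than row `s`; two consecutive decrements by one would make it only two shorter.
-/

open Finset

theorem lt_card_filter_range_iff {p : ℕ → Prop} [DecidablePred p] {m : ℕ}
    (hp : ∀ a b, a ≤ b → p b → p a) (hm : ¬ p m) (k : ℕ) :
    k < #{j ∈ range m | p j} ↔ p k := by
  constructor
  · intro hk
    by_contra hpk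
    have hsub : {j ∈ range m | p j} ⊆ range k := fun j hj => by
      simp only [mem_filter, mem_range] at hj ⊢
      by_contra! hkj
      exact hpk (hp k j hkj hj.2)
    have := card_le_card hsub
    rw [card_range] at this
    omega
  · intro hpk
    have hsub : range (k + 1) ⊆ {j ∈ range m | p j} := fun j hj => by
      have hjk : j ≤ k := Nat.lt_succ_iff.mp (mem_range.mp hj)
      have hkm : k < m := lt_of_not_ge fun hmk => hm (hp m k hmk hpk)
      exact mem_filter.mpr ⟨mem_range.mpr (by omega), hp j k hjk hpk⟩
    simpa using card_le_card hsub

def rowLength (n i s : ℕ) : ℕ := #{k ∈ range (n + 1) | i * 2 ^ k * 3 ^ s ≤ n}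

theorem lt_rowLength_iff {n i : ℕ} (hi : 1 ≤ i) (s k : ℕ) :
    k < rowLength n i s ↔ i * 2 ^ k * 3 ^ s ≤ n := by
  refine lt_card_filter_range_iff (fun a b hab hb => le_trans ?_ hb) ?_ k
  · gcongr
    norm_num
  · have h2 : n + 1 < 2 ^ (n + 1) := Nat.lt_two_pow_self
    have h3 : 2 ^ (n + 1) ≤ i * 2 ^ (n + 1) * 3 ^ s :=
      calc 2 ^ (n + 1) = 1 * 2 ^ (n + 1) * 1 := by ring
        _ ≤ i * 2 ^ (n + 1) * 3 ^ s := by gcongr; exact Nat.one_le_pow _ _ (by norm_num)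
    omega

theorem mul_two_pow_add_three_le_of_mul_three_pow_add_two_le {n i k s : ℕ}
    (h : i * 2 ^ k * 3 ^ (s + 2) ≤ n) : i * 2 ^ (k + 3) * 3 ^ s ≤ n :=
  calc i * 2 ^ (k + 3) * 3 ^ s = i * 2 ^ k * 3 ^ s * 8 := by ring
    _ ≤ i * 2 ^ k * 3 ^ s * 9 := by gcongr; norm_num
    _ = i * 2 ^ k * 3 ^ (s + 2) := by ring
    _ ≤ n := h

theorem rowLength_add_three_le {n i : ℕ} (hi : 1 ≤ i) (s : ℕ) (hpos : 1 ≤ rowLength n i (s + 2)) :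
    rowLength n i (s + 2) + 3 ≤ rowLength n i s := by
  obtain ⟨d, hd⟩ : ∃ d, rowLength n i (s + 2) = d + 1 := ⟨_, (Nat.sub_add_cancel hpos).symm⟩
  have hlast : i * 2 ^ d * 3 ^ (s + 2) ≤ n := (lt_rowLength_iff hi _ d).mp (by omega)
  have := (lt_rowLength_iff hi s (d + 3)).mpr
    (mul_two_pow_add_three_le_of_mul_three_pow_add_two_le hlast)
  omega

theorem stmt_5_general (n i : ℕ) (hin : 1 ≤ i)
    (r : ℕ → ℕ)
    (hr : ∀ s, r s = ((Finset.range (n + 1)).filter (fun k => i * 2 ^ k * 3 ^ s ≤ n)).card)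
    (s : ℕ) (hpos : 1 ≤ r (s + 2)) :
    ¬ (r s = r (s + 1) + 1 ∧ r (s + 1) = r (s + 2) + 1) := by
  rintro ⟨h1, h2⟩
  have hrow : ∀ s, r s = rowLength n i s := hr
  have := rowLength_add_three_le hin s (hrow (s + 2) ▸ hpos)
  rw [← hrow, ← hrow] at this
  omega

theorem stmt_5 (n i : ℕ) (hn : 1 ≤ n) (hi : Nat.Coprime i 6) (hin : 1 ≤ i) (hile : i ≤ n)
    (r : ℕ → ℕ)
    (hr : ∀ s, r s = ((Finset.range (n + 1)).filter (fun k => i * 2 ^ k * 3 ^ s ≤ n)).card)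
    (s : ℕ) (hpos : 1 ≤ r (s + 2)) :
    ¬ (r s = r (s + 1) + 1 ∧ r (s + 1) = r (s + 2) + 1) :=
  stmt_5_general n i hin r hr s hpos
end

section
/- Fix n ≥ 1 and i coprime to 6 with i ≤ n. For s ≥ 0 let r_s = |{ k ≥ 0 : i·2^k·3^s ≤ n }|. Then there is no index s such that r_s, r_{s+1}, r_{s+2}, r_{s+3} are all ≥ 1 and r_s = r_{s+1} + 2, r_{s+1} = r_{s+2} + 2, r_{s+2} = r_{s+3} + 2; i.e., there cannot be four consecutive nonempty rows whose lengths each decrease by exactly 2. -/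
/-!
A row is an initial segment `{k : k < r_t}` of exponents, so `r_t` counts exactly the `k` with
`i·2^k·3^t ≤ n`. Three drops by two give `r_s = r_{s+3} + 6`, so with `m = r_{s+3}` we get
`i·2^(m+5)·3^s ≤ n < i·2^m·3^(s+3)`, which contradicts `3^3 < 2^5`.
-/

open Finset

theorem lt_card_filter_le_iff {f : ℕ → ℕ} (hf : StrictMono f) (n c : ℕ) :
    c < #{k ∈ range (n + 1) | f k ≤ n} ↔ f c ≤ n := by
  constructor
  · intro hc
    by_contra! hfc
    have hsub : {k ∈ range (n + 1) | f k ≤ n} ⊆ range c := by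
      intro k hk
      simp only [mem_filter, mem_range] at hk ⊢
      by_contra! hck
      exact absurd (hfc.trans_le (hf.monotone hck)) (not_lt.2 hk.2)
    exact absurd (card_le_card hsub) (by simpa using hc)
  · intro hfc
    have hsub : range (c + 1) ⊆ {k ∈ range (n + 1) | f k ≤ n} := by
      intro k hk
      simp only [mem_filter, mem_range] at hk ⊢
      have hfk : f k ≤ n := (hf.monotone (Nat.lt_succ_iff.1 hk)).trans hfc
      exact ⟨Nat.lt_succ_of_le ((hf.id_le k).trans hfk), hfk⟩
    simpa using card_le_card hsub

theorem strictMono_mul_two_pow_mul_three_pow {i : ℕ} (hi : 1 ≤ i) (t : ℕ) :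
    StrictMono fun k => i * 2 ^ k * 3 ^ t := fun a b hab => by
  have := Nat.pow_lt_pow_right (by norm_num : 1 < 2) hab
  exact Nat.mul_lt_mul_of_pos_right (Nat.mul_lt_mul_of_pos_left this hi) (by positivity)

theorem mul_two_pow_mul_three_pow_add_three_le (i m s : ℕ) :
    i * 2 ^ m * 3 ^ (s + 3) ≤ i * 2 ^ (m + 5) * 3 ^ s :=
  calc i * 2 ^ m * 3 ^ (s + 3) = i * 2 ^ m * 3 ^ s * 3 ^ 3 := by ring
    _ ≤ i * 2 ^ m * 3 ^ s * 2 ^ 5 := Nat.mul_le_mul_left _ (by norm_num)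
    _ = i * 2 ^ (m + 5) * 3 ^ s := by ring

theorem stmt_6_general (n i : ℕ) (hin : 1 ≤ i)
    (r : ℕ → ℕ)
    (hr : ∀ s, r s = ((Finset.range (n + 1)).filter (fun k => i * 2 ^ k * 3 ^ s ≤ n)).card)
    (s : ℕ) :
    ¬ (r s = r (s + 1) + 2 ∧ r (s + 1) = r (s + 2) + 2 ∧ r (s + 2) = r (s + 3) + 2) := by
  rintro ⟨h1, h2, h3⟩
  have row_iff (t c : ℕ) : c < r t ↔ i * 2 ^ c * 3 ^ t ≤ n := by
    rw [hr t]
    exact lt_card_filter_le_iff (strictMono_mul_two_pow_mul_three_pow hin t) n c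
  set m := r (s + 3)
  have hA : i * 2 ^ (m + 5) * 3 ^ s ≤ n := (row_iff s (m + 5)).1 (by omega)
  have hB : ¬ i * 2 ^ m * 3 ^ (s + 3) ≤ n := fun h => lt_irrefl m ((row_iff (s + 3) m).2 h)
  exact hB ((mul_two_pow_mul_three_pow_add_three_le i m s).trans hA)

theorem stmt_6 (n i : ℕ) (hn : 1 ≤ n) (hi : Nat.Coprime i 6) (hin : 1 ≤ i) (hile : i ≤ n)
    (r : ℕ → ℕ)
    (hr : ∀ s, r s = ((Finset.range (n + 1)).filter (fun k => i * 2 ^ k * 3 ^ s ≤ n)).card)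
    (s : ℕ) (hpos : 1 ≤ r (s + 3)) :
    ¬ (r s = r (s + 1) + 2 ∧ r (s + 1) = r (s + 2) + 2 ∧ r (s + 2) = r (s + 3) + 2) :=
  stmt_6_general n i hin r hr s
end

section
/- The infinite series Σ_{k=1}^{∞} ⌈log₂(k+1)⌉ / 2^{k+1} equals Σ_{t=0}^{∞} 1/2^{2^t}. -/
/-!
Write `⌈log₂ j⌉ = #{t | 2^t < j}` and exchange the order of summation (all terms are
nonnegative): the weight `2^{-j}` of `j` is then counted once for every `t` with `2^t < j`,
and for fixed `t` the geometric tail `∑_{j > 2^t} 2^{-j}` equals `2^{-2^t}`.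
-/

open Finset

theorem hasSum_ite_lt_one_div_two_pow (n : ℕ) :
    HasSum (fun j : ℕ => if n < j then (1 : ℝ) / 2 ^ j else 0) (1 / 2 ^ n) := by
  refine (hasSum_nat_add_iff' (n + 1)).mp ?_
  have hhead : ∑ j ∈ range (n + 1), (if n < j then (1 : ℝ) / 2 ^ j else 0) = 0 :=
    sum_eq_zero fun j hj => if_neg (by simpa [Nat.lt_succ_iff] using hj)
  have htail : (fun j => if n < j + (n + 1) then (1 : ℝ) / 2 ^ (j + (n + 1)) else 0)
      = fun j => 1 / 2 ^ n / 2 / 2 ^ j := by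
    funext j
    rw [if_pos (by omega), pow_add, pow_succ]
    field_simp
  rw [hhead, sub_zero, htail]
  exact hasSum_geometric_two' _

theorem hasSum_ite_pow_lt {b : ℕ} (hb : 1 < b) (j : ℕ) (c : ℝ) :
    HasSum (fun t : ℕ => if b ^ t < j then c else 0) (Nat.clog b j * c) := by
  simp_rw [← Nat.lt_clog_iff_pow_lt hb, ← mem_range]
  have h : HasSum (fun t => if t ∈ range (Nat.clog b j) then c else 0)
      (∑ t ∈ range (Nat.clog b j), if t ∈ range (Nat.clog b j) then c else 0) :=
    hasSum_sum_of_ne_finset_zero fun t ht => if_neg ht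
  rwa [sum_ite_mem, inter_self, sum_const, card_range, nsmul_eq_mul] at h

theorem summable_one_div_two_pow_two_pow : Summable fun t : ℕ => (1 : ℝ) / 2 ^ 2 ^ t :=
  (summable_geometric_two.comp_injective (Nat.pow_right_injective le_rfl)).congr fun t => by simp

theorem hasSum_clog_two_div_two_pow :
    HasSum (fun j : ℕ => (Nat.clog 2 j : ℝ) / 2 ^ j) (∑' t : ℕ, (1 : ℝ) / 2 ^ 2 ^ t) := by
  let F : ℕ × ℕ → ℝ := fun p => if 2 ^ p.1 < p.2 then 1 / 2 ^ p.2 else 0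
  have hF0 : 0 ≤ F := fun p => by dsimp only [F]; split_ifs <;> positivity
  have hF : Summable F := by
    refine (summable_prod_of_nonneg hF0).mpr
      ⟨fun t => (hasSum_ite_lt_one_div_two_pow (2 ^ t)).summable, ?_⟩
    simpa only [F, (hasSum_ite_lt_one_div_two_pow _).tsum_eq] using
      summable_one_div_two_pow_two_pow
  have hrows : HasSum (fun t : ℕ => (1 : ℝ) / 2 ^ 2 ^ t) (∑' p, F p) :=
    hF.hasSum.prod_fiberwise fun t => hasSum_ite_lt_one_div_two_pow (2 ^ t)
  have hcols :
      HasSum (fun j : ℕ => (Nat.clog 2 j : ℝ) / 2 ^ j) (∑' p : ℕ × ℕ, F p.swap) := by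
    have h := hF.prod_symm.hasSum.prod_fiberwise fun j =>
      hasSum_ite_pow_lt one_lt_two j ((1 : ℝ) / 2 ^ j)
    simpa only [mul_one_div] using h
  rw [hrows.tsum_eq, ← (Equiv.prodComm ℕ ℕ).tsum_eq F]
  exact hcols

theorem stmt_18 :
    ∑' k : ℕ, ((Nat.clog 2 (k + 2) : ℝ) / 2 ^ (k + 2))
      = ∑' t : ℕ, (1 : ℝ) / 2 ^ (2 ^ t) := by
  have h := (hasSum_nat_add_iff' 2).mpr hasSum_clog_two_div_two_pow
  have hhead : ∑ j ∈ range 2, (Nat.clog 2 j : ℝ) / 2 ^ j = 0 := by simp [sum_range_succ]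
  rw [hhead, sub_zero] at h
  exact h.tsum_eq
end
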